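/- Let D' be a finite set of dangerous clients, each with d_max(j) > 0, such that no two distinct members of D' conflict. Then there exists a family {B'_j}_{j∈D'} of subsets of F such that (1) B_j ⊆ B'_j ⊆ Ball(j, d_max(j)/10) for every j ∈ D', and (2) the family {B'_j}_{j∈D'} is laminar, i.e., for any two distinct j, j' ∈ D', either B'_j ⊆ B'_{j'}, or B'_{j'} ⊆ B'_j, or B'_j ∩ B'_{j'} = ∅. -/

import Mathlib

/-!
A dangerous client `j` keeps all but `1/3` of its volume `r_j` within `d_max(j)/15`, since
`q_j(r_j - 1/3) ≤ 3 d_av^{r_j}(j)`. If the `d_max/10`-ball of `j'` meets the `d_max/15`-ball of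
`j` while `d_max(j)/6 < d_max(j') ≤ d_max(j)`, each of these cores lies in the other client's
`F`-set, so `r_j = r_{j'}`, and averaging the triangle inequality over a core gives
`d(j,j') ≤ 3 max(d_av(j), d_av(j'))`: a conflict. Hence, taking the clients by decreasing `d_max`
and letting each new `B_j` absorb the earlier sets it meets, every absorbed set lies within
`d_max(j)/60 + d_max(j)/60 + d_max(j)/15 = d_max(j)/10` of `j`, and laminarity is preserved.
-/

open scoped BigOperators

/-- A fractional solution to a fault-tolerant k-median instance: facilities `F`,
clients `C`, requirements `req`, fractional openings `y`, and for each client `j`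
a set `Fj j` of the closest `req j` volume of facilities. -/
structure FracSol (X : Type*) [MetricSpace X] where
  F : Finset X
  C : Finset X
  req : X → ℕ
  y : X → ℝ
  Fj : X → Finset X
  req_pos : ∀ j ∈ C, 0 < req j
  y_pos : ∀ i ∈ F, 0 < y i
  y_le_one : ∀ i ∈ F, y i ≤ 1
  Fj_sub : ∀ j ∈ C, Fj j ⊆ F
  Fj_vol : ∀ j ∈ C, ∑ i ∈ Fj j, y i = (req j : ℝ)
  Fj_closest : ∀ j ∈ C, ∀ i ∈ Fj j, ∀ i' ∈ F, i' ∉ Fj j → dist j i ≤ dist j i'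

namespace FracSol

variable {X : Type*} [MetricSpace X]

/-- The quantile (generalized inverse CDF) function `q_j` of the distances from `j`
to the facilities of `F_j`, weighted by `y`: for `x ∈ (s_{l-1}, s_l]` it equals
`d(j, i_l)`, where facilities are sorted by distance to `j`. -/
noncomputable def q (s : FracSol X) (j : X) (x : ℝ) : ℝ :=
  sInf {D : ℝ | x ≤ ∑ i ∈ (s.Fj j).filter (fun i => dist j i ≤ D), s.y i}

/-- `d_av^t(j) = ∫_{t-1}^{t} q_j(x) dx`. -/
noncomputable def davT (s : FracSol X) (j : X) (t : ℕ) : ℝ :=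
  ∫ u in ((t : ℝ) - 1)..(t : ℝ), s.q j u

/-- `d_max^t(j) = q_j(t)`. -/
noncomputable def dmaxT (s : FracSol X) (j : X) (t : ℕ) : ℝ := s.q j (t : ℝ)

/-- `d_av(j) = (1/r_j) ∫_0^{r_j} q_j(x) dx`. -/
noncomputable def dav (s : FracSol X) (j : X) : ℝ :=
  (1 / (s.req j : ℝ)) * ∫ u in (0 : ℝ)..((s.req j : ℝ)), s.q j u

/-- `d_max(j) = q_j(r_j)`, the maximum distance from `j` to `F_j`. -/
noncomputable def dmax (s : FracSol X) (j : X) : ℝ := s.q j ((s.req j : ℝ))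

/-- `Ball(j, L) = {i ∈ F : d(i,j) ≤ L}`. -/
noncomputable def ball (s : FracSol X) (j : X) (L : ℝ) : Finset X :=
  s.F.filter (fun i => dist i j ≤ L)

/-- `B_j = Ball(j, d_max(j)/15)`. -/
noncomputable def Bset (s : FracSol X) (j : X) : Finset X := s.ball j (s.dmax j / 15)

/-- `y(S) = ∑_{i ∈ S} y_i`. -/
noncomputable def vol (s : FracSol X) (S : Finset X) : ℝ := ∑ i ∈ S, s.y i

/-- A client `j` is dangerous if `d_max(j) ≥ 45 d_av^{r_j}(j)`. -/
def Dangerous (s : FracSol X) (j : X) : Prop :=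
  j ∈ s.C ∧ 45 * s.davT j (s.req j) ≤ s.dmax j

/-- Two distinct dangerous clients conflict if they have the same requirement and
`d(j,j') ≤ 6 max{d_av(j), d_av(j')}`. -/
def Conflict (s : FracSol X) (j j' : X) : Prop :=
  j ≠ j' ∧ s.req j = s.req j' ∧ dist j j' ≤ 6 * max (s.dav j) (s.dav j')

/-- `d_av(j, S) = (∑_{i∈S} d(j,i) y_i) / y(S)`. -/
noncomputable def davS (s : FracSol X) (j : X) (S : Finset X) : ℝ :=
  (∑ i ∈ S, dist j i * s.y i) / s.vol S

/-- Sum of the `r` smallest values among the multiset `{d(j,i) : i ∈ S}`. -/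
noncomputable def kSmallestSum (j : X) (S : Finset X) (r : ℕ) : ℝ :=
  (((S.val.map fun i => dist j i).sort (· ≤ ·)).take r).sum

end FracSol

section WeightedQuantile

variable {ι : Type*} {y f : ι → ℝ} {T : Finset ι} {a : ι} {x D : ℝ}

noncomputable def weightCDF (y f : ι → ℝ) (T : Finset ι) (D : ℝ) : ℝ :=
  ∑ i ∈ T with f i ≤ D, y i

noncomputable def weightedQuantile (y f : ι → ℝ) (T : Finset ι) (x : ℝ) : ℝ :=
  sInf {D : ℝ | x ≤ weightCDF y f T D}

lemma weightCDF_nonneg (hy : ∀ i ∈ T, 0 ≤ y i) (D : ℝ) : 0 ≤ weightCDF y f T D :=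
  Finset.sum_nonneg fun i hi => hy i (Finset.mem_filter.mp hi).1

lemma weightCDF_mono (hy : ∀ i ∈ T, 0 ≤ y i) : Monotone (weightCDF y f T) :=
  fun _ _ h => Finset.sum_le_sum_of_subset_of_nonneg
    (fun _ hi => Finset.mem_filter.mpr
      ⟨(Finset.mem_filter.mp hi).1, (Finset.mem_filter.mp hi).2.trans h⟩)
    fun i hi _ => hy i (Finset.mem_filter.mp hi).1

lemma weightCDF_le_sum (hy : ∀ i ∈ T, 0 ≤ y i) (D : ℝ) : weightCDF y f T D ≤ ∑ i ∈ T, y i :=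
  Finset.sum_le_sum_of_subset_of_nonneg (Finset.filter_subset _ _) fun i hi _ => hy i hi

lemma weightCDF_eq_sum (hD : ∀ i ∈ T, f i ≤ D) : weightCDF y f T D = ∑ i ∈ T, y i := by
  rw [weightCDF, Finset.filter_true_of_mem hD]

lemma weightCDF_of_neg (hf : ∀ i ∈ T, 0 ≤ f i) (hD : D < 0) : weightCDF y f T D = 0 := by
  rw [weightCDF, Finset.filter_false_of_mem fun i hi => not_le.mpr (hD.trans_le (hf i hi)),
    Finset.sum_empty]

lemma upperSemicontinuous_weightCDF (hy : ∀ i ∈ T, 0 ≤ y i) :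
    UpperSemicontinuous (weightCDF y f T) := by
  have : weightCDF y f T = fun D => ∑ i ∈ T, (Set.Ici (f i)).indicator (fun _ => y i) D := by
    ext D
    simp only [weightCDF, Finset.sum_filter, Set.indicator, Set.mem_Ici]
  rw [this]
  exact upperSemicontinuous_sum fun i hi => isClosed_Ici.upperSemicontinuous_indicator (hy i hi)

lemma weightedQuantile_of_nonpos (hy : ∀ i ∈ T, 0 ≤ y i) (hx : x ≤ 0) :
    weightedQuantile y f T x = 0 := by
  have : {D : ℝ | x ≤ weightCDF y f T D} = Set.univ :=
    Set.eq_univ_of_forall fun D => hx.trans (weightCDF_nonneg hy D)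
  rw [weightedQuantile, this, Real.sInf_univ]

lemma bddBelow_le_weightCDF (hf : ∀ i ∈ T, 0 ≤ f i) (hx : 0 < x) :
    BddBelow {D : ℝ | x ≤ weightCDF y f T D} := by
  refine ⟨0, fun D hD => not_lt.mp fun hneg => ?_⟩
  rw [Set.mem_ofPred_eq, weightCDF_of_neg hf hneg] at hD
  linarith

lemma nonempty_le_weightCDF (hx : x ≤ ∑ i ∈ T, y i) :
    {D : ℝ | x ≤ weightCDF y f T D}.Nonempty := by
  obtain ⟨D, hD⟩ := (T.image f).bddAbove
  exact ⟨D, by rwa [Set.mem_ofPred_eq, weightCDF_eq_sum fun i hi =>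
    hD (Finset.mem_coe.mpr (Finset.mem_image_of_mem f hi))]⟩

lemma weightedQuantile_nonneg (hy : ∀ i ∈ T, 0 ≤ y i) (hf : ∀ i ∈ T, 0 ≤ f i) (x : ℝ) :
    0 ≤ weightedQuantile y f T x := by
  rcases le_or_gt x 0 with hx | hx
  · exact (weightedQuantile_of_nonpos hy hx).ge
  · refine Real.sInf_nonneg fun D hD => not_lt.mp fun hneg => ?_
    rw [Set.mem_ofPred_eq, weightCDF_of_neg hf hneg] at hD
    linarith

lemma weightedQuantile_le (hf : ∀ i ∈ T, 0 ≤ f i) (hx0 : 0 < x) (hx : x ≤ ∑ i ∈ T, y i)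
    (hD : ∀ i ∈ T, f i ≤ D) : weightedQuantile y f T x ≤ D :=
  csInf_le (bddBelow_le_weightCDF hf hx0) (by rwa [Set.mem_ofPred_eq, weightCDF_eq_sum hD])

lemma le_weightCDF_weightedQuantile (hy : ∀ i ∈ T, 0 ≤ y i) (hf : ∀ i ∈ T, 0 ≤ f i)
    (hx0 : 0 < x) (hx : x ≤ ∑ i ∈ T, y i) :
    x ≤ weightCDF y f T (weightedQuantile y f T x) :=
  ((upperSemicontinuous_weightCDF hy).isClosed_preimage x).csInf_mem
    (nonempty_le_weightCDF hx) (bddBelow_le_weightCDF hf hx0)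

lemma monotoneOn_weightedQuantile (hy : ∀ i ∈ T, 0 ≤ y i) (hf : ∀ i ∈ T, 0 ≤ f i) :
    MonotoneOn (weightedQuantile y f T) (Set.Icc 0 (∑ i ∈ T, y i)) := by
  intro u hu v hv huv
  rcases hu.1.eq_or_lt with rfl | hu0
  · rw [weightedQuantile_of_nonpos hy le_rfl]
    exact weightedQuantile_nonneg hy hf v
  · exact csInf_le_csInf (bddBelow_le_weightCDF hf hu0) (nonempty_le_weightCDF hv.2)
      fun D hD => huv.trans hD

lemma intervalIntegrable_weightedQuantile (hy : ∀ i ∈ T, 0 ≤ y i) (hf : ∀ i ∈ T, 0 ≤ f i)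
    {u v : ℝ} (hu : 0 ≤ u) (huv : u ≤ v) (hv : v ≤ ∑ i ∈ T, y i) :
    IntervalIntegrable (weightedQuantile y f T) MeasureTheory.volume u v := by
  apply MonotoneOn.intervalIntegrable
  rw [Set.uIcc_of_le huv]
  exact (monotoneOn_weightedQuantile hy hf).mono (Set.Icc_subset_Icc hu hv)

section InsertMax

variable [DecidableEq ι]

lemma weightCDF_insert (ha : a ∉ T) (D : ℝ) :
    weightCDF y f (insert a T) D = (if f a ≤ D then y a else 0) + weightCDF y f T D := by
  unfold weightCDF
  rw [Finset.filter_insert]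
  split_ifs <;> simp [Finset.sum_insert, ha]

variable (ha : a ∉ T) (hmax : ∀ i ∈ T, f i ≤ f a)
include ha hmax

lemma weightedQuantile_insert_of_le (hy : ∀ i ∈ insert a T, 0 ≤ y i) (hx : x ≤ ∑ i ∈ T, y i) :
    weightedQuantile y f (insert a T) x = weightedQuantile y f T x := by
  refine congrArg sInf (Set.ext fun D => ?_)
  simp only [Set.mem_ofPred_eq, weightCDF_insert ha]
  by_cases hD : f a ≤ D
  · rw [if_pos hD, weightCDF_eq_sum fun i hi => (hmax i hi).trans hD]
    have := hy a (Finset.mem_insert_self a T)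
    constructor <;> intro <;> linarith
  · rw [if_neg hD, zero_add]

lemma weightedQuantile_insert_of_lt (hy : ∀ i ∈ insert a T, 0 ≤ y i) (hx : ∑ i ∈ T, y i < x)
    (hx' : x ≤ y a + ∑ i ∈ T, y i) :
    weightedQuantile y f (insert a T) x = f a := by
  have hyT : ∀ i ∈ T, 0 ≤ y i := fun i hi => hy i (Finset.mem_insert_of_mem hi)
  suffices {D : ℝ | x ≤ weightCDF y f (insert a T) D} = Set.Ici (f a) by
    rw [weightedQuantile, this, csInf_Ici]
  refine Set.ext fun D => ?_
  simp only [Set.mem_ofPred_eq, Set.mem_Ici, weightCDF_insert ha]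
  by_cases hD : f a ≤ D
  · rw [if_pos hD, weightCDF_eq_sum fun i hi => (hmax i hi).trans hD]
    exact ⟨fun _ => hD, fun _ => hx'⟩
  · rw [if_neg hD, zero_add]
    have := weightCDF_le_sum hyT (f := f) D
    exact ⟨fun h => absurd (h.trans this) (not_le.mpr hx), fun h => absurd h hD⟩

end InsertMax

theorem integral_weightedQuantile (hy : ∀ i ∈ T, 0 ≤ y i) (hf : ∀ i ∈ T, 0 ≤ f i) :
    ∫ x in (0 : ℝ)..∑ i ∈ T, y i, weightedQuantile y f T x = ∑ i ∈ T, f i * y i := by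
  classical
  induction T using Finset.induction_on_max_value f with
  | empty => simp
  | insert a T ha hmax ih =>
    have hyT : ∀ i ∈ T, 0 ≤ y i := fun i hi => hy i (Finset.mem_insert_of_mem hi)
    have hfT : ∀ i ∈ T, 0 ≤ f i := fun i hi => hf i (Finset.mem_insert_of_mem hi)
    set w := ∑ i ∈ T, y i
    have hw : 0 ≤ w := Finset.sum_nonneg hyT
    have hya : 0 ≤ y a := hy a (Finset.mem_insert_self a T)
    rw [Finset.sum_insert ha, Finset.sum_insert ha]
    have hint : ∀ u v, 0 ≤ u → u ≤ v → v ≤ y a + w →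
        IntervalIntegrable (weightedQuantile y f (insert a T)) MeasureTheory.volume u v :=
      fun u v hu huv hv => intervalIntegrable_weightedQuantile hy hf hu huv
        (by rwa [Finset.sum_insert ha])
    have hlow : ∫ x in (0 : ℝ)..w, weightedQuantile y f (insert a T) x
        = ∫ x in (0 : ℝ)..w, weightedQuantile y f T x :=
      intervalIntegral.integral_congr fun x hx => by
        rw [Set.uIcc_of_le hw] at hx
        exact weightedQuantile_insert_of_le ha hmax hy hx.2
    have htop : ∫ x in w..y a + w, weightedQuantile y f (insert a T) x
        = ∫ _ in w..y a + w, f a :=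
      intervalIntegral.integral_congr_ae (Filter.Eventually.of_forall fun x hx => by
        rw [Set.uIoc_of_le (by linarith)] at hx
        exact weightedQuantile_insert_of_lt ha hmax hy hx.1 hx.2)
    rw [← intervalIntegral.integral_add_adjacent_intervals (hint 0 w le_rfl hw (by linarith))
      (hint w _ hw (by linarith) le_rfl), hlow, htop, ih hyT hfT, intervalIntegral.integral_const,
      smul_eq_mul]
    ring

end WeightedQuantile

lemma mul_le_intervalIntegral_of_monotoneOn {g : ℝ → ℝ} {a b c : ℝ}
    (hg : MonotoneOn g (Set.Icc a b)) (hac : a ≤ c) (hcb : c ≤ b)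
    (hg0 : ∀ x ∈ Set.Icc a c, 0 ≤ g x) : (b - c) * g c ≤ ∫ x in a..b, g x := by
  have hint : ∀ u v, a ≤ u → u ≤ v → v ≤ b → IntervalIntegrable g MeasureTheory.volume u v :=
    fun u v hu huv hv => MonotoneOn.intervalIntegrable <| by
      rw [Set.uIcc_of_le huv]; exact hg.mono (Set.Icc_subset_Icc hu hv)
  have hlow : 0 ≤ ∫ x in a..c, g x := intervalIntegral.integral_nonneg hac hg0
  have hhigh : ∫ _ in c..b, g c ≤ ∫ x in c..b, g x :=
    intervalIntegral.integral_mono_on hcb intervalIntegrable_const (hint c b hac hcb le_rfl)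
      fun x hx => hg ⟨hac, hcb⟩ ⟨hac.trans hx.1, hx.2⟩ hx.1
  rw [intervalIntegral.integral_const, smul_eq_mul] at hhigh
  rw [← intervalIntegral.integral_add_adjacent_intervals (hint a c le_rfl hac hcb)
    (hint c b hac hcb le_rfl)]
  linarith

namespace FracSol

variable {X : Type*} [MetricSpace X] (s : FracSol X) {j j' : X}

lemma y_nonneg_of_mem_Fj (hj : j ∈ s.C) : ∀ i ∈ s.Fj j, 0 ≤ s.y i :=
  fun i hi => (s.y_pos i (s.Fj_sub j hj hi)).le

lemma one_le_req (hj : j ∈ s.C) : (1 : ℝ) ≤ s.req j := by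
  exact_mod_cast s.req_pos j hj

lemma q_nonneg (hj : j ∈ s.C) (x : ℝ) : 0 ≤ s.q j x :=
  weightedQuantile_nonneg (s.y_nonneg_of_mem_Fj hj) (fun _ _ => dist_nonneg) x

lemma dmax_nonneg (hj : j ∈ s.C) : 0 ≤ s.dmax j :=
  s.q_nonneg hj _

lemma monotoneOn_q (hj : j ∈ s.C) : MonotoneOn (s.q j) (Set.Icc 0 (s.req j)) := by
  rw [← s.Fj_vol j hj]
  exact monotoneOn_weightedQuantile (s.y_nonneg_of_mem_Fj hj) fun _ _ => dist_nonneg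

lemma req_mul_dav (hj : j ∈ s.C) :
    s.req j * s.dav j = ∑ i ∈ s.Fj j, dist j i * s.y i := by
  have hr : (s.req j : ℝ) ≠ 0 := (zero_lt_one.trans_le (s.one_le_req hj)).ne'
  rw [dav, ← mul_assoc, mul_one_div_cancel hr, one_mul, ← s.Fj_vol j hj]
  exact integral_weightedQuantile (s.y_nonneg_of_mem_Fj hj) fun _ _ => dist_nonneg

lemma dav_nonneg (hj : j ∈ s.C) : 0 ≤ s.dav j := by
  have h := s.req_mul_dav hj
  have hsum : 0 ≤ ∑ i ∈ s.Fj j, dist j i * s.y i :=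
    Finset.sum_nonneg fun i hi => mul_nonneg dist_nonneg (s.y_nonneg_of_mem_Fj hj i hi)
  exact nonneg_of_mul_nonneg_right (h ▸ hsum) (zero_lt_one.trans_le (s.one_le_req hj))

lemma sum_dist_mul_le_req_mul_dav (hj : j ∈ s.C) {S : Finset X} (hS : S ⊆ s.Fj j) :
    ∑ i ∈ S, dist j i * s.y i ≤ s.req j * s.dav j :=
  s.req_mul_dav hj ▸ Finset.sum_le_sum_of_subset_of_nonneg hS
    fun i hi _ => mul_nonneg dist_nonneg (s.y_nonneg_of_mem_Fj hj i hi)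

lemma vol_le_req (hj : j ∈ s.C) {S : Finset X} (hS : S ⊆ s.Fj j) : s.vol S ≤ s.req j :=
  s.Fj_vol j hj ▸ Finset.sum_le_sum_of_subset_of_nonneg hS
    fun i hi _ => s.y_nonneg_of_mem_Fj hj i hi

lemma mem_Fj_of_dist_lt_dmax (hj : j ∈ s.C) {i : X} (hi : i ∈ s.F) (h : dist j i < s.dmax j) :
    i ∈ s.Fj j := by
  by_contra hiF
  refine h.not_ge (weightedQuantile_le (fun _ _ => dist_nonneg)
    (zero_lt_one.trans_le (s.one_le_req hj)) (s.Fj_vol j hj).ge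
    fun i' hi' => s.Fj_closest j hj i' hi' i hi hiF)

noncomputable def core (j : X) : Finset X :=
  {i ∈ s.Fj j | dist j i ≤ s.dmax j / 15}

lemma core_subset_Fj (j : X) : s.core j ⊆ s.Fj j :=
  Finset.filter_subset _ _

lemma core_subset_Fj_of_dist_lt (hj : j ∈ s.C) (hj' : j' ∈ s.C)
    (h : dist j j' + s.dmax j / 15 < s.dmax j') : s.core j ⊆ s.Fj j' := by
  intro i hi
  obtain ⟨hiF, hid⟩ := Finset.mem_filter.mp hi
  refine s.mem_Fj_of_dist_lt_dmax hj' (s.Fj_sub j hj hiF) ?_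
  calc dist j' i ≤ dist j' j + dist j i := dist_triangle j' j i
    _ < s.dmax j' := by rw [dist_comm]; linarith

variable {s} in
lemma Dangerous.req_sub_le_vol_core (hj : s.Dangerous j) :
    (s.req j : ℝ) - 1 / 3 ≤ s.vol (s.core j) := by
  obtain ⟨hjC, hdang⟩ := hj
  set r : ℝ := (s.req j : ℝ)
  have hr := s.one_le_req hjC
  have hthird : (r - (r - 1 / 3)) * s.q j (r - 1 / 3) ≤ s.davT j (s.req j) :=
    mul_le_intervalIntegral_of_monotoneOn
      ((s.monotoneOn_q hjC).mono (Set.Icc_subset_Icc (by linarith) le_rfl))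
      (by linarith) (by linarith) fun x _ => s.q_nonneg hjC x
  have hq : s.q j (r - 1 / 3) ≤ s.dmax j / 15 := by linarith
  calc r - 1 / 3
      ≤ weightCDF s.y (dist j) (s.Fj j) (s.q j (r - 1 / 3)) :=
        le_weightCDF_weightedQuantile (s.y_nonneg_of_mem_Fj hjC) (fun _ _ => dist_nonneg)
          (by linarith) (by rw [s.Fj_vol j hjC]; linarith)
    _ ≤ weightCDF s.y (dist j) (s.Fj j) (s.dmax j / 15) :=
        weightCDF_mono (s.y_nonneg_of_mem_Fj hjC) hq
    _ = s.vol (s.core j) := rfl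

lemma req_le_of_subset_Fj (hj' : j' ∈ s.C) {S : Finset X} (hS : S ⊆ s.Fj j') {n : ℕ}
    (h : (n : ℝ) - 1 / 3 ≤ s.vol S) : n ≤ s.req j' := by
  have : (n : ℝ) < s.req j' + 1 := by linarith [s.vol_le_req hj' hS]
  exact_mod_cast Nat.lt_add_one_iff.mp (by exact_mod_cast this)

/-- Averaging `d(j,j') ≤ d(j,i) + d(j',i)` over `S` gives `d(j,j') (r - 1/3) ≤ 2 r max(d_av)`,
and `r / (r - 1/3) ≤ 3/2` for `r ≥ 1`. -/
lemma dist_le_three_mul_max_dav (hj : j ∈ s.C) (hj' : j' ∈ s.C) (hreq : s.req j = s.req j')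
    {S : Finset X} (hS : S ⊆ s.Fj j) (hS' : S ⊆ s.Fj j') (hvol : (s.req j : ℝ) - 1 / 3 ≤ s.vol S) :
    dist j j' ≤ 3 * max (s.dav j) (s.dav j') := by
  set r : ℝ := (s.req j : ℝ)
  set m := max (s.dav j) (s.dav j')
  have hr := s.one_le_req hj
  have hm : 0 ≤ m := (s.dav_nonneg hj).trans (le_max_left _ _)
  have htri : dist j j' * s.vol S
      ≤ ∑ i ∈ S, dist j i * s.y i + ∑ i ∈ S, dist j' i * s.y i := by
    rw [vol, Finset.mul_sum, ← Finset.sum_add_distrib]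
    refine Finset.sum_le_sum fun i hi => ?_
    have := dist_triangle_right j j' i
    have := s.y_nonneg_of_mem_Fj hj i (hS hi)
    nlinarith
  have hj_sum := s.sum_dist_mul_le_req_mul_dav hj hS
  have hj'_sum := s.sum_dist_mul_le_req_mul_dav hj' hS'
  rw [← hreq] at hj'_sum
  have hdav : r * s.dav j + r * s.dav j' ≤ 3 * m * (r - 1 / 3) := by
    nlinarith [le_max_left (s.dav j) (s.dav j'), le_max_right (s.dav j) (s.dav j')]
  have hvolS : dist j j' * (r - 1 / 3) ≤ dist j j' * s.vol S :=
    mul_le_mul_of_nonneg_left hvol dist_nonneg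
  by_contra! hlt
  nlinarith

variable {s} in
lemma Dangerous.dmax_le_div_six (hj : s.Dangerous j) (hj' : s.Dangerous j') (hne : j ≠ j')
    (hnc : ¬ s.Conflict j j') (hle : s.dmax j' ≤ s.dmax j) {i : X}
    (hi' : dist i j' ≤ s.dmax j' / 10) (hi : dist i j ≤ s.dmax j / 15) :
    s.dmax j' ≤ s.dmax j / 6 := by
  by_contra! hgt
  have hd : dist j j' ≤ s.dmax j / 15 + s.dmax j' / 10 :=
    (dist_triangle_left j j' i).trans (add_le_add hi hi')
  have hsub : s.core j ⊆ s.Fj j' := s.core_subset_Fj_of_dist_lt hj.1 hj'.1 (by linarith)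
  have hsub' : s.core j' ⊆ s.Fj j :=
    s.core_subset_Fj_of_dist_lt hj'.1 hj.1 (by rw [dist_comm]; linarith)
  have hreq : s.req j = s.req j' :=
    (s.req_le_of_subset_Fj hj'.1 hsub hj.req_sub_le_vol_core).antisymm
      (s.req_le_of_subset_Fj hj.1 hsub' hj'.req_sub_le_vol_core)
  have hdist := s.dist_le_three_mul_max_dav hj.1 hj'.1 hreq (s.core_subset_Fj j) hsub
    hj.req_sub_le_vol_core
  have hm : 0 ≤ max (s.dav j) (s.dav j') := (s.dav_nonneg hj.1).trans (le_max_left _ _)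
  exact hnc ⟨hne, hreq, by linarith⟩

end FracSol

section Laminar

variable {ι α : Type*} [DecidableEq α]

def IsLaminarOn (D : Finset ι) (B : ι → Finset α) : Prop :=
  ∀ j ∈ D, ∀ j' ∈ D, j ≠ j' → B j ⊆ B j' ∨ B j' ⊆ B j ∨ B j ∩ B j' = ∅

def absorb (D : Finset ι) (B : ι → Finset α) (K : Finset α) : Finset α :=
  K ∪ {j ∈ D | ¬ Disjoint (B j) K}.biUnion B

variable {D : Finset ι} {B : ι → Finset α} {K : Finset α} {j : ι}

lemma subset_absorb_self : K ⊆ absorb D B K :=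
  Finset.subset_union_left

lemma subset_absorb (hj : j ∈ D) (h : ¬ Disjoint (B j) K) : B j ⊆ absorb D B K :=
  (Finset.subset_biUnion_of_mem B (Finset.mem_filter.mpr ⟨hj, h⟩)).trans
    Finset.subset_union_right

lemma absorb_subset {L : Finset α} (hK : K ⊆ L) (hB : ∀ j ∈ D, ¬ Disjoint (B j) K → B j ⊆ L) :
    absorb D B K ⊆ L :=
  Finset.union_subset hK <| Finset.biUnion_subset.mpr fun j hj =>
    hB j (Finset.mem_filter.mp hj).1 (Finset.mem_filter.mp hj).2

lemma IsLaminarOn.subset_or_disjoint_absorb (h : IsLaminarOn D B) (hj : j ∈ D) :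
    B j ⊆ absorb D B K ∨ Disjoint (B j) (absorb D B K) := by
  by_cases hin : ∃ j' ∈ D, ¬ Disjoint (B j') K ∧ B j ⊆ B j'
  · obtain ⟨j', hj', hmeet, hsub⟩ := hin
    exact Or.inl (hsub.trans (subset_absorb hj' hmeet))
  · simp only [not_exists, not_and] at hin
    have hjK : Disjoint (B j) K := not_not.mp fun h' => hin j hj h' subset_rfl
    right
    rw [absorb, Finset.disjoint_union_right, Finset.disjoint_biUnion_right]
    refine ⟨hjK, fun j' hj' => ?_⟩
    obtain ⟨hj'D, hmeet⟩ := Finset.mem_filter.mp hj'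
    have hne : j ≠ j' := by rintro rfl; exact hmeet hjK
    rcases h j hj j' hj'D hne with hsub | hsub | hempty
    · exact absurd hsub (hin j' hj'D hmeet)
    · exact absurd (hjK.mono_left hsub) hmeet
    · exact Finset.disjoint_iff_inter_eq_empty.mpr hempty

lemma IsLaminarOn.insert_update [DecidableEq ι] (h : IsLaminarOn D B) {a : ι} (ha : a ∉ D)
    {A : Finset α} (hA : ∀ j ∈ D, B j ⊆ A ∨ Disjoint (B j) A) :
    IsLaminarOn (insert a D) (Function.update B a A) := by
  have hupd : ∀ j ∈ D, Function.update B a A j = B j :=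
    fun j hj => Function.update_of_ne (ne_of_mem_of_not_mem hj ha) _ _
  intro j hj j' hj' hne
  rcases Finset.mem_insert.mp hj with rfl | hjD <;> rcases Finset.mem_insert.mp hj' with rfl | hj'D
  · exact absurd rfl hne
  · rw [Function.update_self, hupd j' hj'D]
    rcases hA j' hj'D with hsub | hdisj
    · exact Or.inr (Or.inl hsub)
    · exact Or.inr (Or.inr (Finset.disjoint_iff_inter_eq_empty.mp hdisj.symm))
  · rw [Function.update_self, hupd j hjD]
    rcases hA j hjD with hsub | hdisj
    · exact Or.inl hsub
    · exact Or.inr (Or.inr (Finset.disjoint_iff_inter_eq_empty.mp hdisj))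
  · rw [hupd j hjD, hupd j' hj'D]
    exact h j hjD j' hj'D hne

end Laminar

section LaminarBalls

variable {X : Type*} [MetricSpace X]

lemma subset_filter_dist_of_mem {F B : Finset X} {j j' i : X} {r r' : ℝ}
    (hB : B ⊆ {x ∈ F | dist x j' ≤ r' / 10}) (hi : i ∈ B) (hij : dist i j ≤ r / 15)
    (hr : r' ≤ r / 6) : B ⊆ {x ∈ F | dist x j ≤ r / 10} := by
  intro x hx
  obtain ⟨hxF, hxj'⟩ := Finset.mem_filter.mp (hB hx)
  have hij' := (Finset.mem_filter.mp (hB hi)).2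
  refine Finset.mem_filter.mpr ⟨hxF, ?_⟩
  calc dist x j ≤ dist x j' + dist j' i + dist i j := dist_triangle4 x j' i j
    _ ≤ r' / 10 + r' / 10 + r / 15 := by rw [dist_comm j' i]; gcongr
    _ ≤ r / 10 := by linarith

theorem exists_isLaminarOn_of_separated [DecidableEq X] (F : Finset X) (ρ : X → ℝ)
    (D : Finset X) (hρ : ∀ j ∈ D, 0 ≤ ρ j)
    (hsep : ∀ j ∈ D, ∀ j' ∈ D, j ≠ j' → ρ j' ≤ ρ j →
      ∀ i, dist i j' ≤ ρ j' / 10 → dist i j ≤ ρ j / 15 → ρ j' ≤ ρ j / 6) :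
    ∃ B : X → Finset X,
      (∀ j ∈ D, {i ∈ F | dist i j ≤ ρ j / 15} ⊆ B j ∧ B j ⊆ {i ∈ F | dist i j ≤ ρ j / 10}) ∧
      IsLaminarOn D B := by
  induction D using Finset.induction_on_max_value ρ with
  | empty => exact ⟨fun _ => ∅, by simp, by simp [IsLaminarOn]⟩
  | insert a D ha hmax ih =>
    obtain ⟨B, hB, hlam⟩ := ih (fun j hj => hρ j (Finset.mem_insert_of_mem hj))
      fun j hj j' hj' => hsep j (Finset.mem_insert_of_mem hj) j' (Finset.mem_insert_of_mem hj')
    set K := {i ∈ F | dist i a ≤ ρ a / 15}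
    have hK : K ⊆ {i ∈ F | dist i a ≤ ρ a / 10} :=
      fun i hi => Finset.mem_filter.mpr ⟨(Finset.mem_filter.mp hi).1,
        (Finset.mem_filter.mp hi).2.trans (by linarith [hρ a (Finset.mem_insert_self a D)])⟩
    have hA : absorb D B K ⊆ {i ∈ F | dist i a ≤ ρ a / 10} := by
      refine absorb_subset hK fun j hj hmeet => ?_
      obtain ⟨i, hiB, hiK⟩ := Finset.not_disjoint_iff.mp hmeet
      have hia := (Finset.mem_filter.mp hiK).2
      have hja : a ≠ j := fun h => ha (h ▸ hj)
      refine subset_filter_dist_of_mem (hB j hj).2 hiB hia ?_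
      exact hsep a (Finset.mem_insert_self a D) j (Finset.mem_insert_of_mem hj) hja (hmax j hj) i
        ((Finset.mem_filter.mp ((hB j hj).2 hiB)).2) hia
    refine ⟨Function.update B a (absorb D B K), fun j hj => ?_,
      hlam.insert_update ha fun j hj => hlam.subset_or_disjoint_absorb hj⟩
    rcases Finset.mem_insert.mp hj with rfl | hjD
    · rw [Function.update_self]
      exact ⟨subset_absorb_self, hA⟩
    · rw [Function.update_of_ne (ne_of_mem_of_not_mem hjD ha)]
      exact hB j hjD

end LaminarBalls

open FracSol in
theorem exists_laminar_family_general {X : Type*} [MetricSpace X] [DecidableEq X]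
    (s : FracSol X) (D' : Finset X) (hD : ∀ j ∈ D', s.Dangerous j)
    (hnc : ∀ j ∈ D', ∀ j' ∈ D', j ≠ j' → ¬ s.Conflict j j') :
    ∃ B' : X → Finset X,
      (∀ j ∈ D', s.Bset j ⊆ B' j ∧ B' j ⊆ s.ball j (s.dmax j / 10)) ∧
      (∀ j ∈ D', ∀ j' ∈ D', j ≠ j' →
        B' j ⊆ B' j' ∨ B' j' ⊆ B' j ∨ B' j ∩ B' j' = ∅) :=
  exists_isLaminarOn_of_separated s.F s.dmax D' (fun j hj => s.dmax_nonneg (hD j hj).1)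
    fun j hj j' hj' hne hle _ hi' hi =>
      (hD j hj).dmax_le_div_six (hD j' hj') hne (hnc j hj j' hj' hne) hle hi' hi

open FracSol in
/-- Lemma 5 of the paper: for a set `D'` of pairwise non-conflicting dangerous clients,
there is a family `{B'_j}` with `B_j ⊆ B'_j ⊆ Ball(j, d_max(j)/10)` which is laminar. -/
theorem exists_laminar_family {X : Type*} [MetricSpace X] [DecidableEq X]
    (s : FracSol X) (D' : Finset X) (hD : ∀ j ∈ D', s.Dangerous j)
    (hpos : ∀ j ∈ D', 0 < s.dmax j)
    (hnc : ∀ j ∈ D', ∀ j' ∈ D', j ≠ j' → ¬ s.Conflict j j') :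
    ∃ B' : X → Finset X,
      (∀ j ∈ D', s.Bset j ⊆ B' j ∧ B' j ⊆ s.ball j (s.dmax j / 10)) ∧
      (∀ j ∈ D', ∀ j' ∈ D', j ≠ j' →
        B' j ⊆ B' j' ∨ B' j' ⊆ B' j ∨ B' j ∩ B' j' = ∅) :=
  exists_laminar_family_general s D' hD hnc
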